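/- Let (M,φ,g) be a 2k-dimensional anti-paraKähler manifold and (TM,g_BS) its tangent bundle with the Berger type deformed Sasaki metric. A vector field ξ on M, regarded as a smooth map ξ : (M,g) → (TM,g_BS), is an isometric immersion if and only if ∇ξ = 0, where ∇ is the Levi-Civita connection of g. -/

import Mathlib

/-!
A local-coordinate formalization (in a global chart `ℝⁿ`, `n = 2k`) of the
geometry of the tangent bundle of an anti-paraKähler manifold `(M, φ, g)`
endowed with the Berger type deformed Sasaki metric `g_BS`.
-/

open scoped BigOperators
open Matrix

namespace BergerSasaki

variable {n : ℕ}

/-- Partial derivative `∂/∂xⁱ` of a real function on the chart `ℝⁿ`. -/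
noncomputable def pd (i : Fin n) (f : (Fin n → ℝ) → ℝ) (x : Fin n → ℝ) : ℝ :=
  fderiv ℝ f x (Pi.single i 1)

/-- The local data of an almost anti-paraHermitian manifold in a global chart `ℝⁿ`:
a Riemannian metric `g` and an almost paracomplex structure `phi` (`phi ∘ phi = id`;
the two eigenbundles for the eigenvalues `±1` have the same rank, i.e. `phi` is
trace free), such that `g(phi X, phi Y) = g(X , Y)`. -/
structure PreData (n : ℕ) where
  g : (Fin n → ℝ) → Matrix (Fin n) (Fin n) ℝ
  phi : (Fin n → ℝ) → Matrix (Fin n) (Fin n) ℝ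
  g_smooth : ∀ i j, ContDiff ℝ (⊤ : ℕ∞) fun x => g x i j
  phi_smooth : ∀ i j, ContDiff ℝ (⊤ : ℕ∞) fun x => phi x i j
  g_symm : ∀ x, (g x).IsSymm
  g_posdef : ∀ x, (g x).PosDef
  phi_sq : ∀ x, phi x * phi x = 1
  phi_trace : ∀ x, (phi x).trace = 0
  compat : ∀ x, (phi x)ᵀ * g x * phi x = g x

/-- Christoffel symbols `Γ^h_{ij}` of the Levi-Civita connection `∇` of `D.g`. -/
noncomputable def Gamma (D : PreData n) (x : Fin n → ℝ) (i j h : Fin n) : ℝ :=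
  (1 / 2) * ∑ l, (D.g x)⁻¹ h l *
    (pd i (fun y => D.g y j l) x + pd j (fun y => D.g y i l) x - pd l (fun y => D.g y i j) x)

/-- Local components `R_{ijl}{}^h` of the Riemann curvature tensor of `∇`. -/
noncomputable def Riem (D : PreData n) (x : Fin n → ℝ) (i j l h : Fin n) : ℝ :=
  pd i (fun y => Gamma D y j l h) x - pd j (fun y => Gamma D y i l h) x
    + ∑ m, Gamma D x j l m * Gamma D x i m h - ∑ m, Gamma D x i l m * Gamma D x j m h

/-- The anti-paraKähler condition `∇ φ = 0`, in local components. -/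
def IsAntiParaKahler (D : PreData n) : Prop :=
  ∀ x i j h,
    pd i (fun y => D.phi y h j) x + ∑ m, Gamma D x i m h * D.phi x m j
      - ∑ m, Gamma D x i j m * D.phi x h m = 0

/-- Points of the induced chart of the tangent bundle `TM`: a pair
`(x, u)` of a base point and a fibre coordinate. -/
abbrev TMpt (n : ℕ) := (Fin n → ℝ) × (Fin n → ℝ)

/-- Index set for the induced coordinates on `TM`: `Sum.inl i ↔ xⁱ`, `Sum.inr i ↔ uⁱ`. -/
abbrev Idx (n : ℕ) := Fin n ⊕ Fin n

/-- Natural components of a point/vector of the tangent bundle chart. -/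
def comp (p : TMpt n) : Idx n → ℝ := Sum.elim p.1 p.2

/-- The natural coordinate basis vectors of the tangent bundle chart. -/
noncomputable def ebase (a : Idx n) : TMpt n :=
  Sum.elim (fun i => (Pi.single i 1, 0)) (fun i => (0, Pi.single i 1)) a

/-- Partial derivatives on the tangent bundle chart. -/
noncomputable def pdT (a : Idx n) (f : TMpt n → ℝ) (p : TMpt n) : ℝ :=
  fderiv ℝ f p (ebase a)

/-- `Γ_{i0}{}^h = u^m Γ^h_{im}` (the index `0` denotes contraction with `u`). -/
noncomputable def Gamma0 (D : PreData n) (p : TMpt n) (i h : Fin n) : ℝ :=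
  ∑ m, Gamma D p.1 i m h * p.2 m

/-- Natural components of the adapted frame: `aframe D (Sum.inl i)` is the horizontal
frame field `E_i = ∂/∂xⁱ - Γ_{i0}{}^h ∂/∂u^h`, and `aframe D (Sum.inr i)` is the
vertical frame field `E_ī = ∂/∂uⁱ`. -/
noncomputable def aframe (D : PreData n) (a : Idx n) (p : TMpt n) : Idx n → ℝ :=
  Sum.elim
    (fun i => Sum.elim (fun h => if h = i then (1 : ℝ) else 0) (fun h => - Gamma0 D p i h))
    (fun i => Sum.elim (fun _ => (0 : ℝ)) (fun h => if h = i then 1 else 0)) a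

/-- The matrix expressing adapted components in terms of natural components
(the inverse of the frame matrix of `aframe`). -/
noncomputable def Bmat (D : PreData n) (p : TMpt n) : Matrix (Idx n) (Idx n) ℝ :=
  fun a b =>
    Sum.elim
      (fun h => Sum.elim (fun i => if h = i then (1 : ℝ) else 0) (fun _ => 0) b)
      (fun h => Sum.elim (fun i => Gamma0 D p i h) (fun i => if h = i then 1 else 0) b) a

/-- The lowered vector `w_i = φ^m_i g_{m0}`, i.e. `g(∂_i, φ u)`. -/
noncomputable def wvec (D : PreData n) (p : TMpt n) (i : Fin n) : ℝ :=
  ∑ m, D.phi p.1 m i * (∑ l, D.g p.1 m l * p.2 l)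

/-- The Berger type deformed Sasaki metric in the adapted frame:
block diagonal with blocks `g_{ij}` and `g_{ij} + δ² g(∂_i, φu) g(∂_j, φu)`. -/
noncomputable def gBSad (D : PreData n) (δ : ℝ) (p : TMpt n) : Matrix (Idx n) (Idx n) ℝ :=
  fun a b =>
    Sum.elim
      (fun i => Sum.elim (fun j => D.g p.1 i j) (fun _ => (0 : ℝ)) b)
      (fun i => Sum.elim (fun _ => (0 : ℝ))
        (fun j => D.g p.1 i j + δ ^ 2 * wvec D p i * wvec D p j) b) a

/-- The Berger type deformed Sasaki metric `g_BS` in the natural coordinates of `TM`. -/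
noncomputable def gBS (D : PreData n) (δ : ℝ) (p : TMpt n) : Matrix (Idx n) (Idx n) ℝ :=
  (Bmat D p)ᵀ * gBSad D δ p * Bmat D p

/-- The Sasaki metric `g_S` in the natural coordinates of `TM` (the case `δ = 0`). -/
noncomputable def gS (D : PreData n) (p : TMpt n) : Matrix (Idx n) (Idx n) ℝ :=
  gBS D 0 p

/-- Christoffel symbols of (the Levi-Civita connection of) a metric `G` on the
tangent bundle chart, in natural coordinates. -/
noncomputable def GammaT (G : TMpt n → Matrix (Idx n) (Idx n) ℝ) (p : TMpt n)
    (a b c : Idx n) : ℝ :=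
  (1 / 2) * ∑ d, (G p)⁻¹ c d *
    (pdT a (fun q => G q b d) p + pdT b (fun q => G q a d) p - pdT d (fun q => G q a b) p)

/-- Covariant derivative (w.r.t. the Levi-Civita connection of `G`) of a vector field `Y`
on `TM` in the direction of a vector field `X`, in natural components. -/
noncomputable def covT (G : TMpt n → Matrix (Idx n) (Idx n) ℝ)
    (X Y : TMpt n → Idx n → ℝ) (p : TMpt n) (c : Idx n) : ℝ :=
  ∑ a, X p a * pdT a (fun q => Y q c) p + ∑ a, ∑ b, GammaT G p a b c * X p a * Y p b

/-- `R^{h·}_{·jki} = R_{ljk}{}^s g^{lh} g_{si}`. -/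
noncomputable def Rup (D : PreData n) (x : Fin n → ℝ) (j k i h : Fin n) : ℝ :=
  ∑ l, ∑ s, Riem D x l j k s * (D.g x)⁻¹ l h * D.g x s i

/-- `R^{h·}_{·j0i} = R_{lj0}{}^s g^{lh} g_{si}`, the index `0` contracted with `u`. -/
noncomputable def Rstar (D : PreData n) (x u : Fin n → ℝ) (j i h : Fin n) : ℝ :=
  ∑ l, ∑ s, (∑ m, Riem D x l j m s * u m) * (D.g x)⁻¹ l h * D.g x s i

/-- Second fundamental form (formula (5)), in natural coordinates, of a map `f` from the
tangent bundle chart (source metric `G`) to the base chart, with target Christoffel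
symbols `Γt`. -/
noncomputable def betaTM2M (G : TMpt n → Matrix (Idx n) (Idx n) ℝ)
    (Γt : (Fin n → ℝ) → Fin n → Fin n → Fin n → ℝ) (f : TMpt n → Fin n → ℝ)
    (p : TMpt n) (a b : Idx n) (h : Fin n) : ℝ :=
  pdT a (fun q => pdT b (fun r => f r h) q) p
    - ∑ c, GammaT G p a b c * pdT c (fun r => f r h) p
    + ∑ i, ∑ j, Γt (f p) i j h * pdT a (fun r => f r i) p * pdT b (fun r => f r j) p

/-- Second fundamental form of a map `f` of the base chart to itself, with source
metric `Gsrc.g` and target Christoffel symbols `Γt`. -/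
noncomputable def betaM2M (Gsrc : PreData n)
    (Γt : (Fin n → ℝ) → Fin n → Fin n → Fin n → ℝ) (f : (Fin n → ℝ) → Fin n → ℝ)
    (x : Fin n → ℝ) (i j h : Fin n) : ℝ :=
  pd i (fun y => pd j (fun z => f z h) y) x
    - ∑ m, Gamma Gsrc x i j m * pd m (fun z => f z h) x
    + ∑ a, ∑ b, Γt (f x) a b h * pd i (fun z => f z a) x * pd j (fun z => f z b) x

/-- Natural components of the map `ξ : M → TM`, `x ↦ (x, ξ(x))`, determined by a
vector field `ξ` on `M`. -/
def ximap (ξ : (Fin n → ℝ) → Fin n → ℝ) (x : Fin n → ℝ) : Idx n → ℝ :=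
  Sum.elim x (ξ x)

/-- A vector field `ξ`, regarded as the map `ξ : (M, g) → (TM, g_BS)`, is an isometric
immersion: the pullback of `g_BS` under `x ↦ (x, ξ(x))` equals `g`. -/
def IsIsometricImmersion (D : PreData n) (δ : ℝ) (ξ : (Fin n → ℝ) → Fin n → ℝ) : Prop :=
  ∀ x i j, (∑ a, ∑ b, pd i (fun y => ximap ξ y a) x * pd j (fun y => ximap ξ y b) x *
      gBS D δ (x, ξ x) a b) = D.g x i j

/-- Covariant derivative `∇_i ξ^h` of a vector field. -/
noncomputable def nabla (D : PreData n) (ξ : (Fin n → ℝ) → Fin n → ℝ)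
    (x : Fin n → ℝ) (i h : Fin n) : ℝ :=
  pd i (fun y => ξ y h) x + ∑ m, Gamma D x i m h * ξ x m

/-- Second covariant derivative `∇_i ∇_j ξ^h` of a vector field. -/
noncomputable def nabla2 (D : PreData n) (ξ : (Fin n → ℝ) → Fin n → ℝ)
    (x : Fin n → ℝ) (i j h : Fin n) : ℝ :=
  pd i (fun y => nabla D ξ y j h) x + ∑ m, Gamma D x i m h * nabla D ξ x j m
    - ∑ m, Gamma D x i j m * nabla D ξ x m h

/-- The coefficient `A^h_{mn} = (δ²/(1+δ²)) φ^k_n φ^h_0 g_{mk}` (index `0` contracted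
with the fibre coordinate `u`). -/
noncomputable def Acoef (D : PreData n) (δ : ℝ) (x u : Fin n → ℝ) (m nn h : Fin n) : ℝ :=
  δ ^ 2 / (1 + δ ^ 2) * ∑ l, D.phi x l nn * (∑ r, D.phi x h r * u r) * D.g x m l

/-- Second fundamental form of the map `ξ : (M, g) → (TM, g_BS)`, `x ↦ (x, ξ(x))`,
in natural components. -/
noncomputable def betaM2TM (D : PreData n) (δ : ℝ) (ξ : (Fin n → ℝ) → Fin n → ℝ)
    (x : Fin n → ℝ) (i j : Fin n) (c : Idx n) : ℝ :=
  pd i (fun y => pd j (fun z => ximap ξ z c) y) x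
    - ∑ m, Gamma D x i j m * pd m (fun z => ximap ξ z c) x
    + ∑ a, ∑ b, GammaT (gBS D δ) (x, ξ x) a b c *
        pd i (fun z => ximap ξ z a) x * pd j (fun z => ximap ξ z b) x

/-- Second fundamental form, in natural coordinates, of a map `f : TM → TM`, the source
carrying a metric `G` and the target a (torsion-free) linear connection with
coefficients `Γt`. -/
noncomputable def betaTM2TM (G : TMpt n → Matrix (Idx n) (Idx n) ℝ)
    (Γt : TMpt n → Idx n → Idx n → Idx n → ℝ) (f : TMpt n → TMpt n)
    (p : TMpt n) (a b c : Idx n) : ℝ :=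
  pdT a (fun q => pdT b (fun r => comp (f r) c) q) p
    - ∑ d, GammaT G p a b d * pdT d (fun r => comp (f r) c) p
    + ∑ d, ∑ e, Γt (f p) d e c *
        pdT a (fun r => comp (f r) d) p * pdT b (fun r => comp (f r) e) p

/-- Horizontal projection (w.r.t. the horizontal distribution of `∇`) of a tangent
vector of `TM`, in natural components. -/
noncomputable def hproj (D : PreData n) (p : TMpt n) (v : Idx n → ℝ) : Idx n → ℝ :=
  fun c => ∑ i, v (Sum.inl i) * aframe D (Sum.inl i) p c

/-- Vertical projection of a tangent vector of `TM`, in natural components. -/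
noncomputable def vproj (D : PreData n) (p : TMpt n) (v : Idx n → ℝ) : Idx n → ℝ :=
  fun c => v c - hproj D p v c

/-- The Schouten-Van Kampen connection associated with the Levi-Civita connection of
`g_BS`:  `∇̃_X Y = V(∇_X (V Y)) + H(∇_X (H Y))`. -/
noncomputable def svk (D : PreData n) (δ : ℝ) (X Y : TMpt n → Idx n → ℝ)
    (p : TMpt n) (c : Idx n) : ℝ :=
  vproj D p (covT (gBS D δ) X (fun q => vproj D q (Y q)) p) c
    + hproj D p (covT (gBS D δ) X (fun q => hproj D q (Y q)) p) c

/-- Lie bracket of vector fields on the tangent bundle chart, in natural components. -/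
noncomputable def lieBracketT (X Y : TMpt n → Idx n → ℝ) (p : TMpt n) (c : Idx n) : ℝ :=
  ∑ a, X p a * pdT a (fun q => Y q c) p - ∑ a, Y p a * pdT a (fun q => X q c) p

/-- Torsion tensor `T(X,Y) = ∇_X Y - ∇_Y X - [X,Y]` of a connection (given as an
operator on vector fields) on the tangent bundle chart. -/
noncomputable def torsionOf
    (Conn : (TMpt n → Idx n → ℝ) → (TMpt n → Idx n → ℝ) → TMpt n → Idx n → ℝ)
    (X Y : TMpt n → Idx n → ℝ) (p : TMpt n) (c : Idx n) : ℝ :=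
  Conn X Y p c - Conn Y X p c - lieBracketT X Y p c

/-- The mean connection `∇ᵐ = ∇̃ - ½ T` of the Schouten-Van Kampen connection `∇̃`. -/
noncomputable def meanConn (D : PreData n) (δ : ℝ) (X Y : TMpt n → Idx n → ℝ)
    (p : TMpt n) (c : Idx n) : ℝ :=
  svk D δ X Y p c - (1 / 2) * torsionOf (svk D δ) X Y p c

/-- The constant coordinate vector field `∂/∂x^a` on the tangent bundle chart. -/
def natE (a : Idx n) : TMpt n → Idx n → ℝ := fun _ c => if c = a then 1 else 0

end BergerSasaki
/-!
In the adapted frame `ξ_* X = ᴴX + ᵛ(∇_X ξ)`, and `g_BS` is block diagonal with blocks `g` and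
`g + δ² (φu)♭ ⊗ (φu)♭`. Hence `ξ^* g_BS = g + g_BS(ᵛ∇ξ, ᵛ∇ξ)`, and since the vertical block
is positive definite the correction term vanishes exactly when `∇ξ = 0`.
-/

namespace BergerSasaki

variable {n : ℕ}

noncomputable def gBSvert (D : PreData n) (δ : ℝ) (p : TMpt n) : Matrix (Fin n) (Fin n) ℝ :=
  D.g p.1 + δ ^ 2 • vecMulVec (wvec D p) (wvec D p)

theorem posDef_gBSvert (D : PreData n) (δ : ℝ) (p : TMpt n) : (gBSvert D δ p).PosDef :=
  (D.g_posdef p.1).add_posSemidef <|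
    (posSemidef_vecMulVec_self_star (wvec D p)).smul (sq_nonneg δ)

theorem pd_apply (i h : Fin n) (x : Fin n → ℝ) :
    pd i (fun y : Fin n → ℝ => y h) x = (Pi.single i 1 : Fin n → ℝ) h := by
  rw [pd, show (fun y : Fin n → ℝ => y h) = ContinuousLinearMap.proj (R := ℝ) h from rfl,
    ContinuousLinearMap.fderiv, ContinuousLinearMap.proj_apply]

theorem gBSad_eq_fromBlocks (D : PreData n) (δ : ℝ) (p : TMpt n) :
    gBSad D δ p = fromBlocks (D.g p.1) 0 0 (gBSvert D δ p) := by
  ext (a | a) (b | b) <;> simp [gBSad, gBSvert, vecMulVec_apply, mul_assoc]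

theorem bmat_mulVec_pd_ximap (D : PreData n) (ξ : (Fin n → ℝ) → Fin n → ℝ) (x : Fin n → ℝ)
    (i : Fin n) :
    Bmat D (x, ξ x) *ᵥ (fun a => pd i (fun y => ximap ξ y a) x) =
      Sum.elim (Pi.single i 1) (nabla D ξ x i) := by
  ext (h | h) <;>
    simp [mulVec, dotProduct, Bmat, Fintype.sum_sum_type, ximap, pd_apply,
      Pi.single_apply, nabla, Gamma0, add_comm]

theorem pullback_gBS_ximap (D : PreData n) (δ : ℝ) (ξ : (Fin n → ℝ) → Fin n → ℝ)
    (x : Fin n → ℝ) (i j : Fin n) :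
    (∑ a, ∑ b, pd i (fun y => ximap ξ y a) x * pd j (fun y => ximap ξ y b) x *
      gBS D δ (x, ξ x) a b) =
      D.g x i j + nabla D ξ x i ⬝ᵥ (gBSvert D δ (x, ξ x) *ᵥ nabla D ξ x j) := by
  set V : Fin n → Idx n → ℝ := fun i a => pd i (fun y => ximap ξ y a) x
  set B := Bmat D (x, ξ x)
  calc (∑ a, ∑ b, V i a * V j b * gBS D δ (x, ξ x) a b)
      = V i ⬝ᵥ (gBS D δ (x, ξ x) *ᵥ V j) := by
        simp only [dotProduct, mulVec, Finset.mul_sum]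
        exact Finset.sum_congr rfl fun a _ => Finset.sum_congr rfl fun b _ => by ring
    _ = (B *ᵥ V i) ⬝ᵥ (gBSad D δ (x, ξ x) *ᵥ (B *ᵥ V j)) := by
        rw [gBS, ← mulVec_mulVec, ← mulVec_mulVec, dotProduct_mulVec, vecMul_transpose]
    _ = D.g x i j + nabla D ξ x i ⬝ᵥ (gBSvert D δ (x, ξ x) *ᵥ nabla D ξ x j) := by
        rw [bmat_mulVec_pd_ximap, bmat_mulVec_pd_ximap, gBSad_eq_fromBlocks, fromBlocks_mulVec,
          sumElim_dotProduct_sumElim]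
        simp only [Sum.elim_comp_inl, Sum.elim_comp_inr, zero_mulVec, add_zero, zero_add]
        simp only [single_one_dotProduct, mulVec_single_one, col_apply]

theorem xi_isometricImmersion_iff_parallel_general (k : ℕ) (D : PreData (2 * k))
    (δ : ℝ) (ξ : (Fin (2 * k) → ℝ) → Fin (2 * k) → ℝ) :
    IsIsometricImmersion D δ ξ ↔ ∀ (x : Fin (2 * k) → ℝ) (i h : Fin (2 * k)),
      nabla D ξ x i h = 0 := by
  simp only [IsIsometricImmersion, pullback_gBS_ximap, add_eq_left]
  refine ⟨fun H x i h => ?_, fun H x i j => by simp [show nabla D ξ x j = 0 from funext (H x j)]⟩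
  by_contra hne
  have hN : nabla D ξ x i ≠ 0 := fun h0 => hne (congrFun h0 h)
  exact ((posDef_gBSvert D δ (x, ξ x)).dotProduct_mulVec_pos hN).ne' (H x i i)

/-- A vector field `ξ` on `M`, regarded as the map
`ξ : (M, g) → (TM, g_BS)`, `x ↦ (x, ξ(x))`, is an isometric immersion if and only if
`∇ ξ = 0`. -/
theorem xi_isometricImmersion_iff_parallel (k : ℕ) (D : PreData (2 * k))
    (hD : IsAntiParaKahler D) (δ : ℝ) (ξ : (Fin (2 * k) → ℝ) → Fin (2 * k) → ℝ)
    (hξ : ∀ h, ContDiff ℝ (⊤ : ℕ∞) fun x => ξ x h) :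
    IsIsometricImmersion D δ ξ ↔ ∀ (x : Fin (2 * k) → ℝ) (i h : Fin (2 * k)),
      nabla D ξ x i h = 0 :=
  xi_isometricImmersion_iff_parallel_general k D δ ξ

end BergerSasaki
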